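/- Let P1 be a SPARQL graph pattern containing no UNION and no OPT subpattern, let P2 be a BGP, and set S = sv(P1) ∩ var(P2). If S ≠ ∅, then for every RDF graph G, ⟦MINUS(P1,P2)⟧_G = {μ ∈ ⟦P1⟧_G | there is no μ' ∈ ⟦P2⟧_G whose restriction to S equals the restriction of μ to S}. -/
import Mathlib


/-!
Formalization of SPARQL graph-pattern syntax and semantics, following
Pérez et al. and the paper "SPARQL in N3".

* IRIs, blank nodes and literals are three pairwise disjoint infinite sets,
  packaged in the type `RTerm` (the set `T = I ∪ B ∪ L`).
* Variables form a further disjoint infinite set `Var`.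
* A pattern term (`PTerm`) is an element of `T ∪ V`.
* A solution mapping is a partial function from variables to RDF terms,
  modeled as `Var → Option RTerm`.
-/

namespace SparqlN3

/-- RDF terms: IRIs, blank nodes, literals — three disjoint infinite sets. -/
inductive RTerm : Type
  | iri : ℕ → RTerm
  | bnode : ℕ → RTerm
  | lit : ℕ → RTerm
deriving DecidableEq

/-- Variables (an infinite set, disjoint from `RTerm` by typing). -/
abbrev Var : Type := ℕ

/-- Elements of `T ∪ V`. -/
abbrev PTerm : Type := RTerm ⊕ Var

/-- Triple patterns: elements of `(T ∪ V) × (T ∪ V) × (T ∪ V)`. -/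
abbrev TriplePat : Type := PTerm × PTerm × PTerm

/-- Ground RDF triples. -/
abbrev Triple : Type := RTerm × RTerm × RTerm

/-- An RDF graph: a set of triples. -/
abbrev Graph : Type := Set Triple

/-- A basic graph pattern: a finite set of triple patterns. -/
abbrev BGP : Type := Finset TriplePat

/-- A (partial) mapping from variables to RDF terms. -/
abbrev Mapping : Type := Var → Option RTerm

/-- The domain of a mapping. -/
def mdom (μ : Mapping) : Set Var := {x | μ x ≠ none}

/-- A solution mapping has a finite domain. -/
def FiniteDom (μ : Mapping) : Prop := (mdom μ).Finite

/-- Compatibility of two mappings: they agree on the common domain. -/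
def compat (μ₁ μ₂ : Mapping) : Prop :=
  ∀ x a b, μ₁ x = some a → μ₂ x = some b → a = b

/-- Union `μ₁ ∪ μ₂` of two (compatible) mappings. -/
def munion (μ₁ μ₂ : Mapping) : Mapping :=
  fun x => (μ₁ x).elim (μ₂ x) some

def varsPT : PTerm → Finset Var
  | .inl _ => ∅
  | .inr v => {v}

/-- Variables of a triple pattern. -/
def varsTP (t : TriplePat) : Finset Var :=
  varsPT t.1 ∪ varsPT t.2.1 ∪ varsPT t.2.2

/-- Variables of a BGP. -/
def varsBGP (P : BGP) : Finset Var := P.biUnion varsTP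

/-- Substitution on a pattern term: replace variables in the domain of `μ`. -/
def substPT (μ : Mapping) : PTerm → PTerm
  | .inl t => .inl t
  | .inr v => (μ v).elim (.inr v) .inl

/-- Substitution `tμ` on a triple pattern (componentwise). -/
def substTP (μ : Mapping) (t : TriplePat) : TriplePat :=
  (substPT μ t.1, substPT μ t.2.1, substPT μ t.2.2)

/-- Substitution `Pμ` on a BGP (literal replacement of variables in `dom μ`). -/
def substBGP (μ : Mapping) (P : BGP) : BGP := P.image (substTP μ)

/-- View a ground triple as a triple pattern. -/
def toPat (t : Triple) : TriplePat := (.inl t.1, .inl t.2.1, .inl t.2.2)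

/-- `InstIn G μ P` : the instantiation `Pμ` is contained in `G`
(every triple pattern of `P` becomes, under `μ`, a ground triple of `G`). -/
def InstIn (G : Graph) (μ : Mapping) (P : BGP) : Prop :=
  ∀ tp ∈ P, ∃ t ∈ G, substTP μ tp = toPat t

/-- Evaluation of a BGP: `⟦P⟧_G = {μ | dom(μ) = var(P) ∧ Pμ ⊆ G}`. -/
def bgpEval (G : Graph) (P : BGP) : Set Mapping :=
  {μ | mdom μ = ↑(varsBGP P) ∧ InstIn G μ P}

/-- SPARQL graph patterns.  Filter conditions are modeled as predicates
on solution mappings. -/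
inductive GP : Type
  | bgp : BGP → GP
  | and : GP → GP → GP
  | union : GP → GP → GP
  | minus : GP → GP → GP
  | fe : GP → GP → GP
  | fne : GP → GP → GP
  | filter : GP → (Mapping → Prop) → GP
  | opt : GP → GP → (Mapping → Prop) → GP

/-- Substitution `Pμ` on a graph pattern, applied componentwise to triple
patterns and recursively through the constructors; for filters, the
predicate is composed with `μ`. -/
def substGP (μ : Mapping) : GP → GP
  | .bgp P => .bgp (substBGP μ P)
  | .and P₁ P₂ => .and (substGP μ P₁) (substGP μ P₂)
  | .union P₁ P₂ => .union (substGP μ P₁) (substGP μ P₂)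
  | .minus P₁ P₂ => .minus (substGP μ P₁) (substGP μ P₂)
  | .fe P₁ P₂ => .fe (substGP μ P₁) (substGP μ P₂)
  | .fne P₁ P₂ => .fne (substGP μ P₁) (substGP μ P₂)
  | .filter P R => .filter (substGP μ P) (fun ν => R (munion μ ν))
  | .opt P₁ P₂ R => .opt (substGP μ P₁) (substGP μ P₂) (fun ν => R (munion μ ν))

/-- Structural depth (used as termination measure for `eval`). -/
def depth : GP → ℕ
  | .bgp _ => 0
  | .and P₁ P₂ => max (depth P₁) (depth P₂) + 1
  | .union P₁ P₂ => max (depth P₁) (depth P₂) + 1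
  | .minus P₁ P₂ => max (depth P₁) (depth P₂) + 1
  | .fe P₁ P₂ => max (depth P₁) (depth P₂) + 1
  | .fne P₁ P₂ => max (depth P₁) (depth P₂) + 1
  | .filter P _ => depth P + 1
  | .opt P₁ P₂ _ => max (depth P₁) (depth P₂) + 1

theorem depth_substGP (μ : Mapping) (P : GP) : depth (substGP μ P) = depth P := by
  induction P <;> simp [substGP, depth, *]

/-- The scope `sv` of a graph pattern. -/
def sv : GP → Finset Var
  | .bgp P => varsBGP P
  | .and P₁ P₂ => sv P₁ ∪ sv P₂
  | .union P₁ P₂ => sv P₁ ∪ sv P₂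
  | .minus P₁ _ => sv P₁
  | .fe P₁ _ => sv P₁
  | .fne P₁ _ => sv P₁
  | .filter P _ => sv P
  | .opt P₁ P₂ _ => sv P₁ ∪ sv P₂

/-- The variables `var(P)` occurring in a graph pattern. -/
def varsGP : GP → Finset Var
  | .bgp P => varsBGP P
  | .and P₁ P₂ => varsGP P₁ ∪ varsGP P₂
  | .union P₁ P₂ => varsGP P₁ ∪ varsGP P₂
  | .minus P₁ P₂ => varsGP P₁ ∪ varsGP P₂
  | .fe P₁ P₂ => varsGP P₁ ∪ varsGP P₂
  | .fne P₁ P₂ => varsGP P₁ ∪ varsGP P₂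
  | .filter P _ => varsGP P
  | .opt P₁ P₂ _ => varsGP P₁ ∪ varsGP P₂

/-- Evaluation `⟦P⟧_G` of SPARQL graph patterns over an RDF graph `G`. -/
def eval (G : Graph) : GP → Set Mapping
  | .bgp P => bgpEval G P
  | .and P₁ P₂ =>
      {μ | ∃ μ₁ ∈ eval G P₁, ∃ μ₂ ∈ eval G P₂, compat μ₁ μ₂ ∧ μ = munion μ₁ μ₂}
  | .union P₁ P₂ => eval G P₁ ∪ eval G P₂
  | .minus P₁ P₂ =>
      {μ ∈ eval G P₁ | ∀ μ' ∈ eval G P₂, ¬ compat μ μ' ∨ mdom μ ∩ mdom μ' = ∅}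
  | .fe P₁ P₂ =>
      {μ ∈ eval G P₁ | (eval G (substGP μ P₂)).Nonempty}
  | .fne P₁ P₂ =>
      {μ ∈ eval G P₁ | eval G (substGP μ P₂) = ∅}
  | .filter P R => {μ ∈ eval G P | R μ}
  | .opt P₁ P₂ R =>
      {μ | ∃ μ₁ ∈ eval G P₁, ∃ μ₂ ∈ eval G P₂,
          compat μ₁ μ₂ ∧ R (munion μ₁ μ₂) ∧ μ = munion μ₁ μ₂}
        ∪ {μ₁ ∈ eval G P₁ | ¬ ∃ μ₂ ∈ eval G P₂, compat μ₁ μ₂ ∧ R (munion μ₁ μ₂)}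
termination_by P => depth P
decreasing_by all_goals (simp [depth_substGP, depth]; try omega)

/-- A pattern contains no UNION and no OPT subpattern. -/
def NoUnionOpt : GP → Prop
  | .bgp _ => True
  | .and P₁ P₂ => NoUnionOpt P₁ ∧ NoUnionOpt P₂
  | .union _ _ => False
  | .minus P₁ P₂ => NoUnionOpt P₁ ∧ NoUnionOpt P₂
  | .fe P₁ P₂ => NoUnionOpt P₁ ∧ NoUnionOpt P₂
  | .fne P₁ P₂ => NoUnionOpt P₁ ∧ NoUnionOpt P₂
  | .filter P _ => NoUnionOpt P
  | .opt _ _ _ => False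

/-- Renaming of variables in a pattern term. -/
def renamePT (σ : Var → Var) : PTerm → PTerm
  | .inl t => .inl t
  | .inr v => .inr (σ v)

/-- Renaming of variables in a triple pattern. -/
def renameTP (σ : Var → Var) (t : TriplePat) : TriplePat :=
  (renamePT σ t.1, renamePT σ t.2.1, renamePT σ t.2.2)

/-- Renaming `Qσ` of variables in a BGP. -/
def renameBGP (σ : Var → Var) (P : BGP) : BGP := P.image (renameTP σ)

/-- Restriction of a mapping to a set of variables. -/
def restrict (μ : Mapping) (S : Finset Var) : Mapping :=
  fun x => if x ∈ S then μ x else none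


lemma mdom_munion (μ₁ μ₂ : Mapping) : mdom (munion μ₁ μ₂) = mdom μ₁ ∪ mdom μ₂ := by
  ext x
  simp only [mdom, munion, Set.mem_setOf_eq, Set.mem_union]
  cases μ₁ x <;> simp [Option.elim]

/-- For a UNION- and OPT-free pattern, every solution mapping has domain `sv P`. -/
lemma mdom_eval_eq_sv (G : Graph) : ∀ (P : GP), NoUnionOpt P →
    ∀ μ ∈ eval G P, mdom μ = ↑(sv P) := by
  intro P
  induction P with
  | bgp Q =>
      intro _ μ hμ
      rw [show eval G (.bgp Q) = bgpEval G Q from by rw [eval]] at hμ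
      exact hμ.1
  | and Q₁ Q₂ ih₁ ih₂ =>
      intro h μ hμ
      rw [eval] at hμ
      obtain ⟨μ₁, hμ₁, μ₂, hμ₂, _, rfl⟩ := hμ
      rw [mdom_munion, ih₁ h.1 μ₁ hμ₁, ih₂ h.2 μ₂ hμ₂]
      simp [sv]
  | union Q₁ Q₂ ih₁ ih₂ => intro h; exact absurd h (by simp [NoUnionOpt])
  | minus Q₁ Q₂ ih₁ ih₂ =>
      intro h μ hμ
      rw [eval] at hμ
      exact ih₁ h.1 μ hμ.1
  | fe Q₁ Q₂ ih₁ ih₂ =>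
      intro h μ hμ
      rw [eval] at hμ
      exact ih₁ h.1 μ hμ.1
  | fne Q₁ Q₂ ih₁ ih₂ =>
      intro h μ hμ
      rw [eval] at hμ
      exact ih₁ h.1 μ hμ.1
  | filter Q R ih =>
      intro h μ hμ
      rw [eval] at hμ
      exact ih h μ hμ.1
  | opt Q₁ Q₂ R ih₁ ih₂ => intro h; exact absurd h (by simp [NoUnionOpt])

/-- For a UNION- and OPT-free pattern `P₁` and a BGP `P₂` with
`S = sv(P₁) ∩ var(P₂) ≠ ∅`,
`⟦MINUS(P₁,P₂)⟧_G = {μ ∈ ⟦P₁⟧_G | ¬∃ μ' ∈ ⟦P₂⟧_G, μ'|_S = μ|_S}`. -/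
theorem minus_eval_eq_restrict (P₁ : GP) (h₁ : NoUnionOpt P₁) (P₂ : BGP)
    (hS : sv P₁ ∩ varsBGP P₂ ≠ ∅) (G : Graph) :
    eval G (.minus P₁ (.bgp P₂)) =
      {μ ∈ eval G P₁ | ¬ ∃ μ' ∈ bgpEval G P₂,
        restrict μ' (sv P₁ ∩ varsBGP P₂) = restrict μ (sv P₁ ∩ varsBGP P₂)} := by
  set S : Finset Var := sv P₁ ∩ varsBGP P₂ with hSdef
  obtain ⟨x₀, hx₀⟩ : S.Nonempty := Finset.nonempty_iff_ne_empty.2 hS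
  have hx₀₁ : x₀ ∈ sv P₁ := (Finset.mem_inter.1 hx₀).1
  have hx₀₂ : x₀ ∈ varsBGP P₂ := (Finset.mem_inter.1 hx₀).2
  ext μ
  rw [show eval G (.minus P₁ (.bgp P₂)) =
      {μ ∈ eval G P₁ | ∀ μ' ∈ bgpEval G P₂,
        ¬ compat μ μ' ∨ mdom μ ∩ mdom μ' = ∅} from by simp only [eval]]
  simp only [Set.mem_setOf_eq, and_congr_right_iff]
  intro hμ
  have hdom : mdom μ = ↑(sv P₁) := mdom_eval_eq_sv G P₁ h₁ μ hμ
  constructor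
  · intro h
    rintro ⟨μ', hμ', hres⟩
    have hdom' : mdom μ' = ↑(varsBGP P₂) := hμ'.1
    rcases h μ' hμ' with hnc | hint
    · apply hnc
      intro x a b hxa hxb
      by_cases hxS : x ∈ S
      · have := congrFun hres x
        simp only [restrict, if_pos hxS] at this
        rw [hxa] at this; rw [hxb] at this
        exact (Option.some_injective _ this.symm)
      · exfalso
        apply hxS
        rw [hSdef, Finset.mem_inter]
        constructor
        · have : x ∈ mdom μ := by simp [mdom, hxa]
          rwa [hdom, Finset.mem_coe] at this
        · have : x ∈ mdom μ' := by simp [mdom, hxb]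
          rwa [hdom', Finset.mem_coe] at this
    · have : x₀ ∈ mdom μ ∩ mdom μ' := by
        rw [hdom, hdom']
        exact ⟨Finset.mem_coe.2 hx₀₁, Finset.mem_coe.2 hx₀₂⟩
      rw [hint] at this
      exact this.elim
  · intro h μ' hμ'
    have hdom' : mdom μ' = ↑(varsBGP P₂) := hμ'.1
    left
    intro hc
    apply h
    refine ⟨μ', hμ', ?_⟩
    funext x
    simp only [restrict]
    by_cases hxS : x ∈ S
    · simp only [if_pos hxS]
      have hx₁ : x ∈ mdom μ := by
        rw [hdom]; exact Finset.mem_coe.2 (Finset.mem_inter.1 hxS).1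
      have hx₂ : x ∈ mdom μ' := by
        rw [hdom']; exact Finset.mem_coe.2 (Finset.mem_inter.1 hxS).2
      simp only [mdom, Set.mem_setOf_eq, ne_eq] at hx₁ hx₂
      obtain ⟨a, ha⟩ := Option.ne_none_iff_exists'.1 hx₁
      obtain ⟨b, hb⟩ := Option.ne_none_iff_exists'.1 hx₂
      rw [ha, hb, hc x a b ha hb]
    · simp [if_neg hxS]

end SparqlN3
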